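/- Let 𝒜 be a compact, irreducible family of subadditive, order-preserving, homogeneous maps on ℝⁿ_{≥0} with r̂(𝒜) = 1, and suppose ‖·‖_* is a monotone extremal norm for 𝒜. Then ‖x‖_{**} := lim_{m→∞} sup_{f ∈ 𝒜^m} ‖f(|x|)‖_* is a well-defined Barabanov norm for 𝒜: it is a norm, it satisfies ‖f(x)‖_{**} ≤ ‖x‖_{**} for all f ∈ 𝒜 and x ∈ ℝⁿ_{≥0}, and for every x ∈ ℝⁿ_{≥0} there exists g ∈ 𝒜 with ‖g(x)‖_{**} = ‖x‖_{**}. -/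

import Mathlib

open Filter Topology Set

noncomputable section

/-- A wedge in a real normed space: a convex set closed under positive scalar multiplication. -/
def IsWedge {X : Type*} [NormedAddCommGroup X] [NormedSpace ℝ X] (W : Set X) : Prop :=
  Convex ℝ W ∧ ∀ c : ℝ, 0 < c → ∀ x ∈ W, c • x ∈ W

/-- A closed cone: closed, convex, closed under positive scalar multiplication, K ∩ (−K) = {0}. -/
def IsClosedCone {X : Type*} [NormedAddCommGroup X] [NormedSpace ℝ X] (K : Set X) : Prop :=
  IsClosed K ∧ Convex ℝ K ∧ (∀ c : ℝ, 0 < c → ∀ x ∈ K, c • x ∈ K) ∧ K ∩ (-K) = {0}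

/-- A polyhedral cone: intersection of finitely many closed halfspaces through the origin. -/
def IsPolyhedralCone {X : Type*} [NormedAddCommGroup X] [NormedSpace ℝ X] (K : Set X) : Prop :=
  ∃ (k : ℕ) (φ : Fin k → (X →ₗ[ℝ] ℝ)), K = {x | ∀ i, 0 ≤ φ i x}

/-- `f` maps `W` into itself and is positively homogeneous on `W`. -/
def HomogOn {X : Type*} [NormedAddCommGroup X] [NormedSpace ℝ X] (f : X → X) (W : Set X) : Prop :=
  Set.MapsTo f W W ∧ ∀ c : ℝ, 0 < c → ∀ x ∈ W, f (c • x) = c • f x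

/-- `f` is order-preserving with respect to the order induced by the cone `K`. -/
def OrderPresOn {X : Type*} [NormedAddCommGroup X] [NormedSpace ℝ X] (f : X → X) (K : Set X) : Prop :=
  ∀ x ∈ K, ∀ y ∈ K, y - x ∈ K → f y - f x ∈ K

/-- `f` is subadditive on `K`: f(x+y) ≤ f(x)+f(y) in the cone order. -/
def SubaddOn {X : Type*} [NormedAddCommGroup X] [NormedSpace ℝ X] (f : X → X) (K : Set X) : Prop :=
  ∀ x ∈ K, ∀ y ∈ K, (f x + f y) - f (x + y) ∈ K

/-- The norm of a homogeneous map on `W`: sup of ‖f x‖ over unit vectors of `W`. -/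
def opNormW {X : Type*} [NormedAddCommGroup X] (f : X → X) (W : Set X) : ℝ :=
  sSup ((fun x => ‖f x‖) '' {x ∈ W | ‖x‖ = 1})

/-- A bounded homogeneous map on `W`. -/
def BoundedMapOn {X : Type*} [NormedAddCommGroup X] (f : X → X) (W : Set X) : Prop :=
  ∃ C : ℝ, ∀ x ∈ W, ‖f x‖ ≤ C * ‖x‖

/-- A bounded family of homogeneous maps on `W`. -/
def BoundedFamOn {X : Type*} [NormedAddCommGroup X] (A : Set (X → X)) (W : Set X) : Prop :=
  ∃ C : ℝ, ∀ f ∈ A, ∀ x ∈ W, ‖f x‖ ≤ C * ‖x‖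

/-- `famPow A m` = 𝒜^m, the set of m-fold compositions of maps from `A` (with 𝒜^0 = {id}). -/
def famPow {X : Type*} (A : Set (X → X)) : ℕ → Set (X → X)
  | 0 => {id}
  | m + 1 => {h | ∃ f ∈ A, ∃ g ∈ famPow A m, h = f ∘ g}

/-- The composition of two families of maps. -/
def compFam {X : Type*} (A B : Set (X → X)) : Set (X → X) :=
  {h | ∃ f ∈ A, ∃ g ∈ B, h = f ∘ g}

/-- The Bonsall cone spectral radius r(f) = inf_{n>0} ‖f^n‖^{1/n}. -/
def coneSpecRad {X : Type*} [NormedAddCommGroup X] (f : X → X) (W : Set X) : ℝ :=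
  ⨅ n : ℕ+, (opNormW (f^[(n : ℕ)]) W) ^ (((n : ℕ) : ℝ)⁻¹)

/-- sup_{f ∈ 𝒜^m} ‖f‖^{1/m}. -/
def jointTerm {X : Type*} [NormedAddCommGroup X] (A : Set (X → X)) (W : Set X) (m : ℕ) : ℝ :=
  sSup ((fun f => (opNormW f W) ^ ((m : ℝ)⁻¹)) '' famPow A m)

/-- sup_{f ∈ 𝒜^m} r(f)^{1/m}. -/
def genTerm {X : Type*} [NormedAddCommGroup X] (A : Set (X → X)) (W : Set X) (m : ℕ) : ℝ :=
  sSup ((fun f => (coneSpecRad f W) ^ ((m : ℝ)⁻¹)) '' famPow A m)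

/-- The joint spectral radius r̂(𝒜) = inf_{m>0} sup_{f ∈ 𝒜^m} ‖f‖^{1/m}. -/
def jointRad {X : Type*} [NormedAddCommGroup X] (A : Set (X → X)) (W : Set X) : ℝ :=
  ⨅ m : ℕ+, jointTerm A W (m : ℕ)

/-- The generalized spectral radius r(𝒜) = sup_{m>0} sup_{f ∈ 𝒜^m} r(f)^{1/m}. -/
def genRad {X : Type*} [NormedAddCommGroup X] (A : Set (X → X)) (W : Set X) : ℝ :=
  ⨆ m : ℕ+, genTerm A W (m : ℕ)

/-- β_m = inf_{f ∈ 𝒜^m} ‖f‖. -/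
def subBeta {X : Type*} [NormedAddCommGroup X] (A : Set (X → X)) (W : Set X) (m : ℕ) : ℝ :=
  sInf ((fun f => opNormW f W) '' famPow A m)

/-- γ_m = inf_{f ∈ 𝒜^m} r(f). -/
def subGamma {X : Type*} [NormedAddCommGroup X] (A : Set (X → X)) (W : Set X) (m : ℕ) : ℝ :=
  sInf ((fun f => coneSpecRad f W) '' famPow A m)

/-- F_m^d = f_m ∘ ⋯ ∘ f_1 for a sequence d of maps. -/
def seqComp {X : Type*} (d : ℕ → X → X) : ℕ → X → X
  | 0 => id
  | m + 1 => d m ∘ seqComp d m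

/-- The standard cone ℝⁿ_{≥0}. -/
def stdCone (n : ℕ) : Set (Fin n → ℝ) := {x | ∀ i, 0 ≤ x i}

/-- The closed face F_J of the standard cone. -/
def stdFace {n : ℕ} (J : Set (Fin n)) : Set (Fin n → ℝ) :=
  {x | (∀ i, 0 ≤ x i) ∧ ∀ i ∉ J, x i = 0}

/-- A family of maps on ℝⁿ_{≥0} is irreducible if no non-trivial closed face is invariant
under every member of the family. -/
def IrreducibleFam {n : ℕ} (A : Set ((Fin n → ℝ) → Fin n → ℝ)) : Prop :=
  ¬ ∃ J : Set (Fin n), J.Nonempty ∧ J ≠ Set.univ ∧ ∀ f ∈ A, Set.MapsTo f (stdFace J) (stdFace J)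

/-- ‖x‖_{**} = lim_m sup_{f ∈ 𝒜^m} ‖f(|x|)‖_* (realized as an infimum of the
non-increasing sequence). -/
def nuStarStar {n : ℕ} (A : Set ((Fin n → ℝ) → Fin n → ℝ)) (νs : (Fin n → ℝ) → ℝ) :
    (Fin n → ℝ) → ℝ :=
  fun x => ⨅ m : ℕ, sSup ((fun f => νs (f (fun i => |x i|))) '' famPow A m)

/-!
Each `a_m(x) = sup_{f ∈ 𝒜^m} ‖f(|x|)‖_*` is a seminorm that is monotone on the cone, and
extremality makes `a_m` non-increasing in `m`; so `‖·‖_{**}` is the infimum of the `a_m` and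
inherits these properties, together with `‖f x‖_{**} ≤ ‖x‖_{**}` because
`a_m(f x) ≤ a_{m+1}(x) ≤ a_m(x)`. On the cone, `‖·‖_{**}` vanishes exactly on the face spanned
by the coordinate vectors it kills. This face is `𝒜`-invariant, so by irreducibility it is trivial
or the whole cone, and the latter is excluded: `‖1‖_{**} = 0` would make every map of some `𝒜^m`
a uniform contraction of the cone, forcing `r̂(𝒜) < 1`.
For the Barabanov property, write each element of `𝒜^{m+1}` as `g ∘ f` with `f ∈ 𝒜` to find
`f_m ∈ 𝒜` with `a_m(f_m x) > ‖x‖_{**} - 1/(m+1)`, extract a uniformly convergent subsequence of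
`(f_m)` by compactness, and pass to the limit using the continuity of each `a_m`.
-/

variable {n : ℕ}

lemma sub_mem_stdCone {x y : Fin n → ℝ} : y - x ∈ stdCone n ↔ x ≤ y :=
  forall_congr' fun _ => sub_nonneg

def IsMonoSubaddHomog (f : (Fin n → ℝ) → Fin n → ℝ) : Prop :=
  HomogOn f (stdCone n) ∧ OrderPresOn f (stdCone n) ∧ SubaddOn f (stdCone n)

namespace IsMonoSubaddHomog

variable {f g : (Fin n → ℝ) → Fin n → ℝ} {x y : Fin n → ℝ}

lemma nonneg (hf : IsMonoSubaddHomog f) (hx : 0 ≤ x) : 0 ≤ f x := hf.1.1 hx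

lemma map_zero (hf : IsMonoSubaddHomog f) : f 0 = 0 := by
  have h := hf.1.2 2 two_pos 0 (le_refl (0 : Fin n → ℝ))
  rw [smul_zero, two_smul] at h
  exact left_eq_add.mp h

lemma map_smul (hf : IsMonoSubaddHomog f) {c : ℝ} (hc : 0 ≤ c) (hx : 0 ≤ x) :
    f (c • x) = c • f x := by
  rcases hc.eq_or_lt with rfl | hc
  · rw [zero_smul, zero_smul, hf.map_zero]
  · exact hf.1.2 c hc x hx

lemma mono (hf : IsMonoSubaddHomog f) (hx : 0 ≤ x) (hxy : x ≤ y) : f x ≤ f y :=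
  sub_mem_stdCone.mp <| hf.2.1 x hx y (hx.trans hxy) (sub_mem_stdCone.mpr hxy)

lemma map_add_le (hf : IsMonoSubaddHomog f) (hx : 0 ≤ x) (hy : 0 ≤ y) :
    f (x + y) ≤ f x + f y :=
  sub_mem_stdCone.mp <| hf.2.2 x hx y hy

protected lemma id : IsMonoSubaddHomog (id : (Fin n → ℝ) → Fin n → ℝ) :=
  ⟨⟨fun _ hx => hx, fun _ _ _ _ => rfl⟩, fun _ _ _ _ h => h,
    fun _ _ _ _ => sub_mem_stdCone.mpr le_rfl⟩

lemma comp (hf : IsMonoSubaddHomog f) (hg : IsMonoSubaddHomog g) :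
    IsMonoSubaddHomog (f ∘ g) := by
  refine ⟨⟨fun x hx => hf.nonneg (hg.nonneg hx), fun c hc x hx => ?_⟩,
    fun x hx y _ hxy => ?_, fun x hx y hy => ?_⟩
  · simp only [Function.comp_apply, hg.map_smul hc.le hx, hf.map_smul hc.le (hg.nonneg hx)]
  · exact sub_mem_stdCone.mpr <|
      hf.mono (hg.nonneg hx) (hg.mono hx (sub_mem_stdCone.mp hxy))
  · exact sub_mem_stdCone.mpr <|
      (hf.mono (hg.nonneg (add_nonneg hx hy)) (hg.map_add_le hx hy)).trans
        (hf.map_add_le (hg.nonneg hx) (hg.nonneg hy))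

lemma sub_le_norm_smul (hf : IsMonoSubaddHomog f) (hx : 0 ≤ x) (hy : 0 ≤ y) :
    f x - f y ≤ ‖x - y‖ • f 1 := by
  have hle : x ≤ y + ‖x - y‖ • 1 := fun i => by
    have := (le_abs_self _).trans (norm_le_pi_norm (x - y) i)
    simp only [Pi.sub_apply] at this
    simp only [Pi.add_apply, Pi.smul_apply, Pi.one_apply, smul_eq_mul, mul_one]
    linarith
  have hr : (0 : Fin n → ℝ) ≤ ‖x - y‖ • 1 := smul_nonneg (norm_nonneg _) zero_le_one
  have := (hf.mono hx hle).trans (hf.map_add_le hy hr)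
  rw [hf.map_smul (norm_nonneg _) zero_le_one] at this
  exact sub_le_iff_le_add'.mpr this

lemma lipschitzOnWith (hf : IsMonoSubaddHomog f) :
    LipschitzOnWith ‖f 1‖₊ f (stdCone n) := by
  refine LipschitzOnWith.of_dist_le_mul fun x hx y hy => ?_
  have hbound : ∀ {u v : Fin n → ℝ}, 0 ≤ u → 0 ≤ v → ∀ i, f u i - f v i ≤ ‖f 1‖ * ‖u - v‖ :=
    fun hu hv i => (hf.sub_le_norm_smul hu hv i).trans <| by
      rw [Pi.smul_apply, smul_eq_mul, mul_comm]
      exact mul_le_mul_of_nonneg_right ((le_abs_self _).trans (norm_le_pi_norm (f 1) i))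
        (norm_nonneg _)
  rw [dist_eq_norm, dist_eq_norm, coe_nnnorm,
    pi_norm_le_iff_of_nonneg (mul_nonneg (norm_nonneg _) (norm_nonneg _))]
  intro i
  rw [Pi.sub_apply, Real.norm_eq_abs, abs_sub_le_iff]
  exact ⟨hbound hx hy i, norm_sub_rev x y ▸ hbound hy hx i⟩

end IsMonoSubaddHomog

section famPow

variable {X : Type*} {A : Set (X → X)}

lemma famPow_nonempty (hA : A.Nonempty) (m : ℕ) : (famPow A m).Nonempty := by
  induction m with
  | zero => exact ⟨id, rfl⟩
  | succ m ih =>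
    obtain ⟨f, hf⟩ := hA
    obtain ⟨g, hg⟩ := ih
    exact ⟨f ∘ g, f, hf, g, hg, rfl⟩

lemma famPow_subset {S : Set (X → X)} (hid : id ∈ S) (hS : ∀ f ∈ A, ∀ g ∈ S, f ∘ g ∈ S)
    (m : ℕ) : famPow A m ⊆ S := by
  induction m with
  | zero => rintro g (rfl : g = id); exact hid
  | succ m ih => rintro _ ⟨f, hf, g, hg, rfl⟩; exact hS f hf g (ih hg)

lemma comp_mem_famPow_succ {f g : X → X} (hf : f ∈ A) {m : ℕ} (hg : g ∈ famPow A m) :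
    g ∘ f ∈ famPow A (m + 1) := by
  induction m generalizing g with
  | zero => obtain rfl : g = id := hg; exact ⟨f, hf, id, rfl, rfl⟩
  | succ m ih =>
    obtain ⟨f', hf', g', hg', rfl⟩ := hg
    exact ⟨f', hf', g' ∘ f, ih hg', rfl⟩

lemma exists_comp_of_mem_famPow_succ {h : X → X} {m : ℕ} (hh : h ∈ famPow A (m + 1)) :
    ∃ g ∈ famPow A m, ∃ f ∈ A, h = g ∘ f := by
  induction m generalizing h with
  | zero =>
    obtain ⟨f, hf, g, rfl : g = id, rfl⟩ := hh
    exact ⟨id, rfl, f, hf, rfl⟩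
  | succ m ih =>
    obtain ⟨f, hf, k, hk, rfl⟩ := hh
    obtain ⟨g, hg, f', hf', rfl⟩ := ih hk
    exact ⟨f ∘ g, ⟨f, hf, g, hg, rfl⟩, f', hf', rfl⟩

end famPow

section famPowCone

variable {A : Set ((Fin n → ℝ) → Fin n → ℝ)} {g : (Fin n → ℝ) → Fin n → ℝ} {m : ℕ}

lemma isMonoSubaddHomog_of_mem_famPow (hA : ∀ f ∈ A, IsMonoSubaddHomog f)
    (hg : g ∈ famPow A m) : IsMonoSubaddHomog g :=
  famPow_subset (S := {g | IsMonoSubaddHomog g}) IsMonoSubaddHomog.id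
    (fun f hf _ hg => (hA f hf).comp hg) m hg

lemma apply_le_of_mem_famPow {ν : (Fin n → ℝ) → ℝ} (hA : ∀ f ∈ A, IsMonoSubaddHomog f)
    (hext : ∀ f ∈ A, ∀ x, 0 ≤ x → ν (f x) ≤ ν x) (hg : g ∈ famPow A m) {x : Fin n → ℝ}
    (hx : 0 ≤ x) : ν (g x) ≤ ν x :=
  (famPow_subset (S := {g | ∀ x, 0 ≤ x → 0 ≤ g x ∧ ν (g x) ≤ ν x})
    (fun _ hx => ⟨hx, le_rfl⟩)
    (fun f hf _ hg x hx => ⟨(hA f hf).nonneg (hg x hx).1,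
      (hext f hf _ (hg x hx).1).trans (hg x hx).2⟩) m hg x hx).2

end famPowCone

namespace Seminorm

lemma apply_le_mul_norm_pi {ι : Type*} [Fintype ι] [DecidableEq ι] (p : Seminorm ℝ (ι → ℝ))
    (x : ι → ℝ) : p x ≤ (∑ i, p (Pi.single i 1)) * ‖x‖ := by
  calc p x = p (∑ i, x i • Pi.single i (1 : ℝ)) := by
        simp only [← Pi.single_smul, smul_eq_mul, mul_one, Finset.univ_sum_single]
    _ ≤ ∑ i, p (x i • Pi.single i (1 : ℝ)) :=
        Finset.le_sum_of_subadditive p (map_zero p).le (map_add_le_add p) _ _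
    _ ≤ ∑ i, ‖x‖ * p (Pi.single i 1) := Finset.sum_le_sum fun i _ => by
        rw [map_smul_eq_mul]
        exact mul_le_mul_of_nonneg_right (norm_le_pi_norm x i) (apply_nonneg _ _)
    _ = (∑ i, p (Pi.single i 1)) * ‖x‖ := by rw [← Finset.mul_sum, mul_comm]

lemma continuous_pi {ι : Type*} [Fintype ι] (p : Seminorm ℝ (ι → ℝ)) : Continuous p := by
  classical
  refine (LipschitzWith.of_le_add_mul (∑ i, p (Pi.single i 1)).toNNReal fun x y => ?_).continuous
  rw [Real.coe_toNNReal _ (Finset.sum_nonneg fun _ _ => apply_nonneg _ _), dist_eq_norm]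
  linarith [le_of_abs_le (abs_sub_map_le_sub p x y), p.apply_le_mul_norm_pi (x - y)]

lemma exists_pos_mul_norm_le {E : Type*} [NormedAddCommGroup E] [NormedSpace ℝ E] [ProperSpace E]
    (p : Seminorm ℝ E) (hp : Continuous p) (hdef : ∀ x, p x = 0 → x = 0) :
    ∃ c > 0, ∀ x, c * ‖x‖ ≤ p x := by
  rcases subsingleton_or_nontrivial E with _ | _
  · exact ⟨1, one_pos, fun x => by simp [Subsingleton.elim x 0]⟩
  obtain ⟨z, hz, hmin⟩ := (isCompact_sphere (0 : E) 1).exists_isMinOn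
    (NormedSpace.sphere_nonempty.mpr zero_le_one) hp.continuousOn
  have hz0 : z ≠ 0 := ne_zero_of_mem_unit_sphere ⟨z, hz⟩
  refine ⟨p z, (apply_nonneg p z).lt_of_ne fun h => hz0 (hdef z h.symm), fun x => ?_⟩
  rcases eq_or_ne x 0 with rfl | hx
  · simp
  have hxn : 0 < ‖x‖ := norm_pos_iff.mpr hx
  have h := isMinOn_iff.mp hmin _ (show ‖x‖⁻¹ • x ∈ Metric.sphere (0 : E) 1 by
    rw [mem_sphere_zero_iff_norm, norm_smul, norm_inv, norm_norm, inv_mul_cancel₀ hxn.ne'])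
  rw [map_smul_eq_mul, norm_inv, norm_norm, ← div_eq_inv_mul,
    le_div_iff₀ hxn] at h
  exact h

end Seminorm

section Face

variable (p : Seminorm ℝ (Fin n → ℝ))

lemma Seminorm.apply_eq_zero_iff_mem_stdFace (hmono : MonotoneOn p (Set.Ici 0))
    {z : Fin n → ℝ} (hz : 0 ≤ z) :
    p z = 0 ↔ z ∈ stdFace {i | p (Pi.single i 1) = 0} := by
  have hsingle : ∀ i, p (Pi.single i (z i)) = |z i| * p (Pi.single i 1) := fun i => by
    rw [← Real.norm_eq_abs, ← map_smul_eq_mul, ← Pi.single_smul, smul_eq_mul, mul_one]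
  constructor
  · refine fun h => ⟨hz, fun i hi => ?_⟩
    have hle : Pi.single i (z i) ≤ z := fun j => by
      rcases eq_or_ne j i with rfl | hj
      · simp
      · simpa [hj] using hz j
    have h0 := hmono (Pi.single_nonneg.mpr (hz i)) hz hle
    rw [h, hsingle] at h0
    have := mul_eq_zero.mp (le_antisymm h0 (by positivity))
    exact abs_eq_zero.mp (this.resolve_right hi)
  · rintro ⟨-, hzJ⟩
    refine le_antisymm ?_ (apply_nonneg p z)
    calc p z = p (∑ i, Pi.single i (z i)) := by rw [Finset.univ_sum_single]
      _ ≤ ∑ i, p (Pi.single i (z i)) :=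
        Finset.le_sum_of_subadditive p (map_zero p).le (map_add_le_add p) _ _
      _ = 0 := Finset.sum_eq_zero fun i _ => by
        by_cases hi : p (Pi.single i 1) = 0
        · rw [hsingle, hi, mul_zero]
        · rw [hzJ i hi, Pi.single_zero, map_zero]

lemma Seminorm.eq_zero_of_irreducibleFam {A : Set ((Fin n → ℝ) → Fin n → ℝ)}
    (hirr : IrreducibleFam A) (hA : ∀ f ∈ A, ∀ x, 0 ≤ x → 0 ≤ f x)
    (hext : ∀ f ∈ A, ∀ x, 0 ≤ x → p (f x) ≤ p x)
    (hmono : MonotoneOn p (Set.Ici 0)) (hone : p 1 ≠ 0)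
    {z : Fin n → ℝ} (hz : 0 ≤ z) (hpz : p z = 0) : z = 0 := by
  set J := {i | p (Pi.single i 1) = 0}
  have hJ : J ≠ Set.univ := fun hJ => hone <|
    (p.apply_eq_zero_iff_mem_stdFace hmono zero_le_one).mpr
      ⟨fun _ => zero_le_one, fun i hi => absurd (Set.eq_univ_iff_forall.mp hJ i) hi⟩
  have hinv : ∀ f ∈ A, Set.MapsTo f (stdFace J) (stdFace J) := by
    rintro f hf x hx
    have hx0 : p x = 0 := (p.apply_eq_zero_iff_mem_stdFace hmono hx.1).mpr hx
    have hfx := hA f hf x hx.1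
    refine (p.apply_eq_zero_iff_mem_stdFace hmono hfx).mp ?_
    exact le_antisymm (hx0 ▸ hext f hf x hx.1) (apply_nonneg p _)
  have hJe : J = ∅ := Set.not_nonempty_iff_eq_empty.mp fun hne => hirr ⟨J, hne, hJ, hinv⟩
  have hzJ := ((p.apply_eq_zero_iff_mem_stdFace hmono hz).mp hpz).2
  exact funext fun i => hzJ i (Set.eq_empty_iff_forall_notMem.mp hJe i)

end Face

def orbitSup (ν : (Fin n → ℝ) → ℝ) (G : Set ((Fin n → ℝ) → Fin n → ℝ)) (x : Fin n → ℝ) : ℝ :=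
  sSup ((fun g => ν (g |x|)) '' G)

section orbitSup

variable (ν : Seminorm ℝ (Fin n → ℝ)) {G : Set ((Fin n → ℝ) → Fin n → ℝ)} {x y : Fin n → ℝ}

lemma orbitSup_nonneg : 0 ≤ orbitSup ν G x :=
  Real.sSup_nonneg <| Set.forall_mem_image.mpr fun _ _ => apply_nonneg _ _

lemma orbitSup_le {a : ℝ} (ha : 0 ≤ a) (h : ∀ g ∈ G, ν (g |x|) ≤ a) : orbitSup ν G x ≤ a :=
  Real.sSup_le (Set.forall_mem_image.mpr h) ha

lemma apply_abs_le_orbitSup (hGν : ∀ g ∈ G, ∀ x, 0 ≤ x → ν (g x) ≤ ν x) {g} (hg : g ∈ G) :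
    ν (g |x|) ≤ orbitSup ν G x :=
  le_csSup ⟨ν |x|, Set.forall_mem_image.mpr fun g hg => hGν g hg _ (abs_nonneg x)⟩
    ⟨g, hg, rfl⟩

lemma orbitSup_abs : orbitSup ν G |x| = orbitSup ν G x := by
  simp only [orbitSup, abs_abs]

lemma orbitSup_smul (hG : ∀ g ∈ G, IsMonoSubaddHomog g) (c : ℝ) (x : Fin n → ℝ) :
    orbitSup ν G (c • x) = |c| * orbitSup ν G x := by
  have habs : |c • x| = |c| • |x| := funext fun i => by simp [abs_mul]
  have hterm : ∀ g ∈ G, ν (g |c • x|) = |c| * ν (g |x|) := fun g hg => by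
    rw [habs, (hG g hg).map_smul (abs_nonneg c) (abs_nonneg x), map_smul_eq_mul,
      Real.norm_eq_abs, abs_abs]
  rw [orbitSup, orbitSup, Set.image_congr hterm, ← smul_eq_mul,
    ← Real.sSup_smul_of_nonneg (abs_nonneg c), ← Set.image_smul, Set.image_image]
  rfl

lemma orbitSup_add_le (hG : ∀ g ∈ G, IsMonoSubaddHomog g)
    (hGν : ∀ g ∈ G, ∀ x, 0 ≤ x → ν (g x) ≤ ν x) (hmono : MonotoneOn ν (Set.Ici 0))
    (x y : Fin n → ℝ) : orbitSup ν G (x + y) ≤ orbitSup ν G x + orbitSup ν G y := by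
  refine orbitSup_le ν (add_nonneg (orbitSup_nonneg ν) (orbitSup_nonneg ν)) fun g hg => ?_
  have hg' := hG g hg
  have hx := abs_nonneg x
  have hy := abs_nonneg y
  have hxy := abs_nonneg (x + y)
  calc ν (g |x + y|) ≤ ν (g (|x| + |y|)) :=
        hmono (hg'.nonneg hxy) (hg'.nonneg (add_nonneg hx hy)) (hg'.mono hxy (abs_add_le x y))
    _ ≤ ν (g |x| + g |y|) :=
        hmono (hg'.nonneg (add_nonneg hx hy)) (add_nonneg (hg'.nonneg hx) (hg'.nonneg hy))
          (hg'.map_add_le hx hy)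
    _ ≤ ν (g |x|) + ν (g |y|) := map_add_le_add ν _ _
    _ ≤ orbitSup ν G x + orbitSup ν G y :=
        add_le_add (apply_abs_le_orbitSup ν hGν hg) (apply_abs_le_orbitSup ν hGν hg)

lemma orbitSup_mono (hG : ∀ g ∈ G, IsMonoSubaddHomog g)
    (hGν : ∀ g ∈ G, ∀ x, 0 ≤ x → ν (g x) ≤ ν x) (hmono : MonotoneOn ν (Set.Ici 0))
    (hx : 0 ≤ x) (hxy : x ≤ y) : orbitSup ν G x ≤ orbitSup ν G y := by
  refine orbitSup_le ν (orbitSup_nonneg ν) fun g hg => ?_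
  calc ν (g |x|) ≤ ν (g |y|) := by
        rw [abs_of_nonneg hx, abs_of_nonneg (hx.trans hxy)]
        exact hmono ((hG g hg).nonneg hx) ((hG g hg).nonneg (hx.trans hxy)) ((hG g hg).mono hx hxy)
    _ ≤ orbitSup ν G y := apply_abs_le_orbitSup ν hGν hg

lemma continuous_orbitSup (hG : ∀ g ∈ G, IsMonoSubaddHomog g)
    (hGν : ∀ g ∈ G, ∀ x, 0 ≤ x → ν (g x) ≤ ν x) (hmono : MonotoneOn ν (Set.Ici 0)) :
    Continuous (orbitSup ν G) :=
  (Seminorm.of (orbitSup ν G) (orbitSup_add_le ν hG hGν hmono) (orbitSup_smul ν hG)).continuous_pi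

end orbitSup

section nuStarStar

variable (ν : Seminorm ℝ (Fin n → ℝ)) {A : Set ((Fin n → ℝ) → Fin n → ℝ)} {x y : Fin n → ℝ}

lemma nuStarStar_eq_iInf (x : Fin n → ℝ) :
    nuStarStar A ν x = ⨅ m, orbitSup ν (famPow A m) x := rfl

lemma nuStarStar_le_orbitSup (m : ℕ) (x : Fin n → ℝ) :
    nuStarStar A ν x ≤ orbitSup ν (famPow A m) x :=
  ciInf_le ⟨0, Set.forall_mem_range.mpr fun _ => orbitSup_nonneg ν⟩ m

lemma nuStarStar_nonneg (x : Fin n → ℝ) : 0 ≤ nuStarStar A ν x :=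
  Real.iInf_nonneg fun _ => orbitSup_nonneg ν

lemma nuStarStar_smul (hA : ∀ f ∈ A, IsMonoSubaddHomog f) (c : ℝ) (x : Fin n → ℝ) :
    nuStarStar A ν (c • x) = |c| * nuStarStar A ν x := by
  simp only [nuStarStar_eq_iInf, Real.mul_iInf_of_nonneg (abs_nonneg c),
    orbitSup_smul ν fun _ => isMonoSubaddHomog_of_mem_famPow hA]

lemma orbitSup_famPow_apply_le (hA : ∀ f ∈ A, IsMonoSubaddHomog f)
    (hext : ∀ f ∈ A, ∀ x, 0 ≤ x → ν (f x) ≤ ν x) {f : (Fin n → ℝ) → Fin n → ℝ} (hf : f ∈ A)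
    (hx : 0 ≤ x) (m : ℕ) : orbitSup ν (famPow A m) (f x) ≤ orbitSup ν (famPow A (m + 1)) x := by
  refine orbitSup_le ν (orbitSup_nonneg ν) fun g hg => ?_
  have h := apply_abs_le_orbitSup ν (fun _ hg _ => apply_le_of_mem_famPow hA hext hg)
    (comp_mem_famPow_succ hf hg) (x := x)
  rw [abs_of_nonneg ((hA f hf).nonneg hx)]
  rwa [abs_of_nonneg hx] at h

lemma orbitSup_famPow_antitone (hA : ∀ f ∈ A, IsMonoSubaddHomog f)
    (hext : ∀ f ∈ A, ∀ x, 0 ≤ x → ν (f x) ≤ ν x) (x : Fin n → ℝ) :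
    Antitone fun m => orbitSup ν (famPow A m) x := by
  refine antitone_nat_of_succ_le fun m => orbitSup_le ν (orbitSup_nonneg ν) ?_
  rintro _ ⟨f, hf, g, hg, rfl⟩
  exact (hext f hf _ ((isMonoSubaddHomog_of_mem_famPow hA hg).nonneg (abs_nonneg x))).trans
    (apply_abs_le_orbitSup ν (fun _ hg _ => apply_le_of_mem_famPow hA hext hg) hg)

lemma tendsto_orbitSup_famPow (hA : ∀ f ∈ A, IsMonoSubaddHomog f)
    (hext : ∀ f ∈ A, ∀ x, 0 ≤ x → ν (f x) ≤ ν x) (x : Fin n → ℝ) :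
    Tendsto (fun m => orbitSup ν (famPow A m) x) atTop (𝓝 (nuStarStar A ν x)) :=
  tendsto_atTop_ciInf (orbitSup_famPow_antitone ν hA hext x)
    ⟨0, Set.forall_mem_range.mpr fun _ => orbitSup_nonneg ν⟩

lemma nuStarStar_apply_le (hA : ∀ f ∈ A, IsMonoSubaddHomog f)
    (hext : ∀ f ∈ A, ∀ x, 0 ≤ x → ν (f x) ≤ ν x) {f : (Fin n → ℝ) → Fin n → ℝ} (hf : f ∈ A)
    (hx : 0 ≤ x) :
    nuStarStar A ν (f x) ≤ nuStarStar A ν x :=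
  le_ciInf fun m => (nuStarStar_le_orbitSup ν m (f x)).trans <|
    (orbitSup_famPow_apply_le ν hA hext hf hx m).trans
      (orbitSup_famPow_antitone ν hA hext x (Nat.le_succ m))

lemma nuStarStar_add_le (hA : ∀ f ∈ A, IsMonoSubaddHomog f)
    (hext : ∀ f ∈ A, ∀ x, 0 ≤ x → ν (f x) ≤ ν x) (hmono : MonotoneOn ν (Set.Ici 0))
    (x y : Fin n → ℝ) :
    nuStarStar A ν (x + y) ≤ nuStarStar A ν x + nuStarStar A ν y :=
  ge_of_tendsto' ((tendsto_orbitSup_famPow ν hA hext x).add (tendsto_orbitSup_famPow ν hA hext y))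
    fun m => (nuStarStar_le_orbitSup ν m _).trans <| orbitSup_add_le ν
      (fun _ => isMonoSubaddHomog_of_mem_famPow hA)
      (fun _ hg _ => apply_le_of_mem_famPow hA hext hg) hmono x y

lemma nuStarStar_mono (hA : ∀ f ∈ A, IsMonoSubaddHomog f)
    (hext : ∀ f ∈ A, ∀ x, 0 ≤ x → ν (f x) ≤ ν x) (hmono : MonotoneOn ν (Set.Ici 0))
    (hx : 0 ≤ x) (hxy : x ≤ y) : nuStarStar A ν x ≤ nuStarStar A ν y :=
  le_ciInf fun m => (nuStarStar_le_orbitSup ν m x).trans <| orbitSup_mono ν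
    (fun _ => isMonoSubaddHomog_of_mem_famPow hA)
    (fun _ hg _ => apply_le_of_mem_famPow hA hext hg) hmono hx hxy

end nuStarStar

section jointRad

variable {X : Type*} [NormedAddCommGroup X] {A : Set (X → X)} {W : Set X}

lemma opNormW_nonneg (f : X → X) (W : Set X) : 0 ≤ opNormW f W :=
  Real.sSup_nonneg <| Set.forall_mem_image.mpr fun _ _ => norm_nonneg _

lemma opNormW_le {f : X → X} {C : ℝ} (hC : 0 ≤ C) (h : ∀ x ∈ W, ‖x‖ = 1 → ‖f x‖ ≤ C) :
    opNormW f W ≤ C :=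
  Real.sSup_le (Set.forall_mem_image.mpr fun x hx => h x hx.1 hx.2) hC

lemma jointRad_lt_one {m : ℕ} (hm : 0 < m) {C : ℝ} (hC0 : 0 ≤ C) (hC1 : C < 1)
    (h : ∀ g ∈ famPow A m, opNormW g W ≤ C) : jointRad A W < 1 := by
  have hterm_nonneg : ∀ k : ℕ+, 0 ≤ jointTerm A W k := fun _ => Real.sSup_nonneg <|
    Set.forall_mem_image.mpr fun g _ => Real.rpow_nonneg (opNormW_nonneg g W) _
  calc jointRad A W ≤ jointTerm A W (⟨m, hm⟩ : ℕ+) :=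
        ciInf_le ⟨0, Set.forall_mem_range.mpr hterm_nonneg⟩ _
    _ ≤ C ^ (m : ℝ)⁻¹ := Real.sSup_le (Set.forall_mem_image.mpr fun g hg =>
        Real.rpow_le_rpow (opNormW_nonneg g W) (h g hg) (by positivity)) (by positivity)
    _ < 1 := Real.rpow_lt_one hC0 hC1 (by positivity)

lemma nonempty_of_one_le_jointRad (hr : 1 ≤ jointRad A W) : A.Nonempty := by
  refine Set.nonempty_iff_ne_empty.mpr fun hA₀ =>
    hr.not_gt (jointRad_lt_one one_pos le_rfl one_pos ?_)
  rintro _ ⟨f, hf, -⟩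
  exact absurd (hA₀ ▸ hf) (Set.notMem_empty f)

end jointRad

section Positivity

variable (ν : Seminorm ℝ (Fin n → ℝ)) {A : Set ((Fin n → ℝ) → Fin n → ℝ)}

lemma nuStarStar_one_pos (hA : ∀ f ∈ A, IsMonoSubaddHomog f)
    (hext : ∀ f ∈ A, ∀ x, 0 ≤ x → ν (f x) ≤ ν x) (hmono : MonotoneOn ν (Set.Ici 0))
    (hdef : ∀ x, ν x = 0 → x = 0) (hr : 1 ≤ jointRad A (stdCone n)) :
    0 < nuStarStar A ν 1 := by
  obtain ⟨c, hc, hcν⟩ := ν.exists_pos_mul_norm_le ν.continuous_pi hdef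
  by_contra! h0
  obtain ⟨m, hm, hm1⟩ := (((tendsto_orbitSup_famPow ν hA hext 1).eventually_lt_const
    (h0.trans_lt hc)).and (eventually_ge_atTop 1)).exists
  have hq := div_nonneg (orbitSup_nonneg ν (G := famPow A m) (x := 1)) hc.le
  refine hr.not_gt (jointRad_lt_one hm1 hq ((div_lt_one hc).mpr hm)
    fun g hg => opNormW_le hq fun w hw hw1 => ?_)
  have hg' := isMonoSubaddHomog_of_mem_famPow hA hg
  have hw_le : w ≤ 1 := fun i => (le_abs_self _).trans ((norm_le_pi_norm w i).trans hw1.le)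
  rw [le_div_iff₀ hc, mul_comm]
  calc c * ‖g w‖ ≤ ν (g w) := hcν _
    _ ≤ ν (g 1) := hmono (hg'.nonneg hw) (hg'.nonneg zero_le_one) (hg'.mono hw hw_le)
    _ = ν (g |1|) := by rw [abs_of_nonneg (zero_le_one : (0 : Fin n → ℝ) ≤ 1)]
    _ ≤ orbitSup ν (famPow A m) 1 :=
      apply_abs_le_orbitSup ν (fun _ hg _ => apply_le_of_mem_famPow hA hext hg) hg

lemma nuStarStar_abs (x : Fin n → ℝ) : nuStarStar A ν |x| = nuStarStar A ν x := by
  simp only [nuStarStar_eq_iInf, orbitSup_abs]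

lemma nuStarStar_eq_zero_iff (hirr : IrreducibleFam A) (hA : ∀ f ∈ A, IsMonoSubaddHomog f)
    (hext : ∀ f ∈ A, ∀ x, 0 ≤ x → ν (f x) ≤ ν x) (hmono : MonotoneOn ν (Set.Ici 0))
    (hdef : ∀ x, ν x = 0 → x = 0) (hr : 1 ≤ jointRad A (stdCone n)) {x : Fin n → ℝ} :
    nuStarStar A ν x = 0 ↔ x = 0 := by
  refine ⟨fun hx => ?_, by rintro rfl; simpa using nuStarStar_smul ν hA 0 0⟩
  let p : Seminorm ℝ (Fin n → ℝ) :=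
    Seminorm.of (nuStarStar A ν) (nuStarStar_add_le ν hA hext hmono) (nuStarStar_smul ν hA)
  refine (Pi.abs_eq_zero x).mp <| p.eq_zero_of_irreducibleFam hirr (fun f hf _ => (hA f hf).nonneg)
    (fun f hf _ => nuStarStar_apply_le ν hA hext hf)
    (fun _ hx _ _ hxy => nuStarStar_mono ν hA hext hmono hx hxy)
    (nuStarStar_one_pos ν hA hext hmono hdef hr).ne' (abs_nonneg x) ?_
  exact (nuStarStar_abs ν x).trans hx

end Positivity

lemma exists_strictMono_tendsto_apply {X Y : Type*} [TopologicalSpace X] [PseudoMetricSpace Y]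
    {S : Set X} [CompactSpace S] {A : Set (X → Y)}
    (hcomp : IsCompact {g : C(S, Y) | ∃ f ∈ A, ∀ z, g z = f z.1})
    (hcont : ∀ f ∈ A, ContinuousOn f S) {F : ℕ → X → Y} (hF : ∀ m, F m ∈ A)
    {x : X} (hx : x ∈ S) :
    ∃ g ∈ A, ∃ ψ : ℕ → ℕ, StrictMono ψ ∧ Tendsto (fun j => F (ψ j) x) atTop (𝓝 (g x)) := by
  obtain ⟨g₀, ⟨g, hg, hg₀⟩, ψ, hψ, hlim⟩ := hcomp.tendsto_subseq
    (x := fun m => ⟨fun z => F m z.1, (hcont _ (hF m)).domRestrict⟩)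
    fun m => ⟨F m, hF m, fun _ => rfl⟩
  refine ⟨g, hg, ψ, hψ, ?_⟩
  have h := ((continuous_eval_const (⟨x, hx⟩ : S)).tendsto g₀).comp hlim
  rw [hg₀] at h
  exact h

lemma isCompact_stdCone_inter_closedBall :
    IsCompact {x : Fin n → ℝ | x ∈ stdCone n ∧ ‖x‖ ≤ 1} :=
  (isCompact_closedBall (0 : Fin n → ℝ) 1).of_isClosed_subset
    ((isClosed_Ici (a := (0 : Fin n → ℝ))).inter (isClosed_le continuous_norm continuous_const))
    fun _ hx => mem_closedBall_zero_iff.mpr hx.2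

section Barabanov

variable (ν : Seminorm ℝ (Fin n → ℝ)) {A : Set ((Fin n → ℝ) → Fin n → ℝ)} {x : Fin n → ℝ}

lemma exists_nuStarStar_sub_lt_orbitSup (hA : ∀ f ∈ A, IsMonoSubaddHomog f)
    (hext : ∀ f ∈ A, ∀ x, 0 ≤ x → ν (f x) ≤ ν x) (hAne : A.Nonempty) (hx : 0 ≤ x) (m : ℕ)
    {ε : ℝ} (hε : 0 < ε) : ∃ f ∈ A, nuStarStar A ν x - ε < orbitSup ν (famPow A m) (f x) := by
  obtain ⟨_, ⟨h, hh, rfl⟩, hlt⟩ := exists_lt_of_lt_csSup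
    ((famPow_nonempty hAne (m + 1)).image fun g => ν (g |x|))
    (sub_lt_self (orbitSup ν (famPow A (m + 1)) x) hε)
  obtain ⟨g, hg, f, hf, rfl⟩ := exists_comp_of_mem_famPow_succ hh
  refine ⟨f, hf, ?_⟩
  calc nuStarStar A ν x - ε ≤ orbitSup ν (famPow A (m + 1)) x - ε :=
        sub_le_sub_right (nuStarStar_le_orbitSup ν _ x) ε
    _ < ν ((g ∘ f) |x|) := hlt
    _ ≤ orbitSup ν (famPow A m) (f x) := by
      simpa only [Function.comp_apply, abs_of_nonneg hx, abs_of_nonneg ((hA f hf).nonneg hx)]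
        using apply_abs_le_orbitSup ν (fun _ hg _ => apply_le_of_mem_famPow hA hext hg) hg
          (x := f x)

lemma exists_nuStarStar_apply_eq_of_norm_le_one (hA : ∀ f ∈ A, IsMonoSubaddHomog f)
    (hext : ∀ f ∈ A, ∀ x, 0 ≤ x → ν (f x) ≤ ν x) (hmono : MonotoneOn ν (Set.Ici 0))
    (hcomp : IsCompact {g : C(({x | x ∈ stdCone n ∧ ‖x‖ ≤ 1} : Set (Fin n → ℝ)), Fin n → ℝ) |
      ∃ f ∈ A, ∀ z, g z = f z.1})
    (hAne : A.Nonempty) (hx : 0 ≤ x) (hx1 : ‖x‖ ≤ 1) :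
    ∃ g ∈ A, nuStarStar A ν (g x) = nuStarStar A ν x := by
  choose F hFA hF using fun m : ℕ =>
    exists_nuStarStar_sub_lt_orbitSup ν hA hext hAne hx m (Nat.one_div_pos_of_nat (n := m))
  have := isCompact_iff_compactSpace.mp (isCompact_stdCone_inter_closedBall (n := n))
  obtain ⟨g, hg, ψ, hψ, hlim⟩ := exists_strictMono_tendsto_apply hcomp
    (fun f hf => (hA f hf).lipschitzOnWith.continuousOn.mono fun _ hz => hz.1) hFA ⟨hx, hx1⟩
  refine ⟨g, hg, le_antisymm (nuStarStar_apply_le ν hA hext hg hx) (le_ciInf fun m => ?_)⟩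
  have hcont := continuous_orbitSup ν (fun _ => isMonoSubaddHomog_of_mem_famPow hA)
    (fun _ hg _ => apply_le_of_mem_famPow hA hext hg) hmono (G := famPow A m)
  refine le_of_tendsto_of_tendsto (f := fun j => nuStarStar A ν x - 1 / ((ψ j : ℝ) + 1)) ?_
    ((hcont.tendsto (g x)).comp hlim) ?_
  · simpa using (tendsto_one_div_add_atTop_nhds_zero_nat.comp hψ.tendsto_atTop).const_sub
      (nuStarStar A ν x)
  · filter_upwards [eventually_ge_atTop m] with j hj
    exact (hF (ψ j)).le.trans (orbitSup_famPow_antitone ν hA hext _ (hj.trans (hψ.id_le j)))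

lemma exists_nuStarStar_apply_eq (hA : ∀ f ∈ A, IsMonoSubaddHomog f)
    (hext : ∀ f ∈ A, ∀ x, 0 ≤ x → ν (f x) ≤ ν x) (hmono : MonotoneOn ν (Set.Ici 0))
    (hcomp : IsCompact {g : C(({x | x ∈ stdCone n ∧ ‖x‖ ≤ 1} : Set (Fin n → ℝ)), Fin n → ℝ) |
      ∃ f ∈ A, ∀ z, g z = f z.1})
    (hAne : A.Nonempty) (hx : 0 ≤ x) : ∃ g ∈ A, nuStarStar A ν (g x) = nuStarStar A ν x := by
  have hr : 0 < ‖x‖ + 1 := by positivity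
  have hy : 0 ≤ (‖x‖ + 1)⁻¹ • x := smul_nonneg (inv_nonneg.mpr hr.le) hx
  have hy1 : ‖(‖x‖ + 1)⁻¹ • x‖ ≤ 1 := by
    rw [norm_smul, Real.norm_of_nonneg (inv_nonneg.mpr hr.le), inv_mul_le_iff₀ hr]
    linarith
  obtain ⟨g, hg, hgy⟩ :=
    exists_nuStarStar_apply_eq_of_norm_le_one ν hA hext hmono hcomp hAne hy hy1
  refine ⟨g, hg, ?_⟩
  rw [← smul_inv_smul₀ hr.ne' x, (hA g hg).map_smul hr.le hy, nuStarStar_smul ν hA,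
    nuStarStar_smul ν hA, hgy]

end Barabanov

theorem statement15_general {n : ℕ} (A : Set ((Fin n → ℝ) → Fin n → ℝ))
    (hA : ∀ f ∈ A, HomogOn f (stdCone n) ∧ OrderPresOn f (stdCone n) ∧
      SubaddOn f (stdCone n))
    (hcomp : IsCompact {g : C(({x | x ∈ stdCone n ∧ ‖x‖ ≤ 1} : Set (Fin n → ℝ)), Fin n → ℝ) |
      ∃ f ∈ A, ∀ z, g z = f z.1})
    (hirr : IrreducibleFam A)
    (hr : jointRad A (stdCone n) = 1)
    (νs : (Fin n → ℝ) → ℝ)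
    (hν1 : ∀ x y, νs (x + y) ≤ νs x + νs y)
    (hν2 : ∀ (c : ℝ) (x), νs (c • x) = |c| * νs x)
    (hν3 : ∀ x, νs x = 0 ↔ x = 0)
    (hν5 : ∀ x y : Fin n → ℝ, (∀ i, 0 ≤ x i) → (∀ i, x i ≤ y i) → νs x ≤ νs y)
    (hext : ∀ f ∈ A, ∀ x ∈ stdCone n, νs (f x) ≤ νs x) :
    (∀ x, Tendsto (fun m : ℕ => sSup ((fun f => νs (f (fun i => |x i|))) '' famPow A m))
      atTop (𝓝 (nuStarStar A νs x))) ∧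
    (∀ x y, nuStarStar A νs (x + y) ≤ nuStarStar A νs x + nuStarStar A νs y) ∧
    (∀ (c : ℝ) (x), nuStarStar A νs (c • x) = |c| * nuStarStar A νs x) ∧
    (∀ x, nuStarStar A νs x = 0 ↔ x = 0) ∧
    (∀ x, 0 ≤ nuStarStar A νs x) ∧
    (∀ f ∈ A, ∀ x ∈ stdCone n, nuStarStar A νs (f x) ≤ nuStarStar A νs x) ∧
    (∀ x ∈ stdCone n, ∃ g ∈ A, nuStarStar A νs (g x) = nuStarStar A νs x) := by
  let ν : Seminorm ℝ (Fin n → ℝ) := Seminorm.of νs hν1 hν2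
  have hmono : MonotoneOn ν (Set.Ici 0) := fun x hx y _ hxy => hν5 x y hx hxy
  have hA' : ∀ f ∈ A, IsMonoSubaddHomog f := hA
  have hAne : A.Nonempty := nonempty_of_one_le_jointRad hr.ge
  exact ⟨tendsto_orbitSup_famPow ν hA' hext, nuStarStar_add_le ν hA' hext hmono,
    nuStarStar_smul ν hA',
    fun _ => nuStarStar_eq_zero_iff ν hirr hA' hext hmono (fun x => (hν3 x).mp) hr.ge,
    nuStarStar_nonneg ν, fun _ hf _ hx => nuStarStar_apply_le ν hA' hext hf hx,
    fun _ hx => exists_nuStarStar_apply_eq ν hA' hext hmono hcomp hAne hx⟩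

theorem statement15 {n : ℕ} (A : Set ((Fin n → ℝ) → Fin n → ℝ))
    (hA : ∀ f ∈ A, HomogOn f (stdCone n) ∧ OrderPresOn f (stdCone n) ∧
      SubaddOn f (stdCone n))
    (hcomp : IsCompact {g : C(({x | x ∈ stdCone n ∧ ‖x‖ ≤ 1} : Set (Fin n → ℝ)), Fin n → ℝ) |
      ∃ f ∈ A, ∀ z, g z = f z.1})
    (hirr : IrreducibleFam A)
    (hr : jointRad A (stdCone n) = 1)
    (νs : (Fin n → ℝ) → ℝ)
    (hν1 : ∀ x y, νs (x + y) ≤ νs x + νs y)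
    (hν2 : ∀ (c : ℝ) (x), νs (c • x) = |c| * νs x)
    (hν3 : ∀ x, νs x = 0 ↔ x = 0)
    (hν4 : ∀ x, 0 ≤ νs x)
    (hν5 : ∀ x y : Fin n → ℝ, (∀ i, 0 ≤ x i) → (∀ i, x i ≤ y i) → νs x ≤ νs y)
    (hext : ∀ f ∈ A, ∀ x ∈ stdCone n, νs (f x) ≤ νs x) :
    (∀ x, Tendsto (fun m : ℕ => sSup ((fun f => νs (f (fun i => |x i|))) '' famPow A m))
      atTop (𝓝 (nuStarStar A νs x))) ∧
    (∀ x y, nuStarStar A νs (x + y) ≤ nuStarStar A νs x + nuStarStar A νs y) ∧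
    (∀ (c : ℝ) (x), nuStarStar A νs (c • x) = |c| * nuStarStar A νs x) ∧
    (∀ x, nuStarStar A νs x = 0 ↔ x = 0) ∧
    (∀ x, 0 ≤ nuStarStar A νs x) ∧
    (∀ f ∈ A, ∀ x ∈ stdCone n, nuStarStar A νs (f x) ≤ nuStarStar A νs x) ∧
    (∀ x ∈ stdCone n, ∃ g ∈ A, nuStarStar A νs (g x) = nuStarStar A νs x) :=
  statement15_general A hA hcomp hirr hr νs hν1 hν2 hν3 hν5 hext
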